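/- arXiv:2107.10055 — 6 statements merged into one kernel-verified Lean document; each statement's English description precedes it below -/
import Mathlib

section
/- The operator T : ℓ² → ℓ² defined by T(x) = Σ_{n=1}^∞ f_n(‖x‖) e_n is globally Lipschitz continuous with Lipschitz constant at most √17 / 2. -/
/-- The piecewise linear functions `f n` from the paper. -/
noncomputable def f (n : ℕ) (t : ℝ) : ℝ :=
  if t ≤ (2:ℝ)^(-(n:ℤ)-1) ∨ (2:ℝ)^(-(n:ℤ)+2) ≤ t then 0
  else if t ≤ (2:ℝ)^(-(n:ℤ)) then 2*(t - (2:ℝ)^(-(n:ℤ)-1))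
  else if t ≤ (2:ℝ)^(-(n:ℤ)+1) then (2:ℝ)^(-(n:ℤ))
  else (1/2)*((2:ℝ)^(-(n:ℤ)+2) - t)


/-- The Hilbert space ℓ² of square-summable real sequences. -/
noncomputable abbrev l2 := lp (fun _ : ℕ => ℝ) 2

/-!
Write `f n` through the layer lengths `λ_k(t) = |(-∞, t] ∩ [2^(1-k), 2^(2-k)]|`:
`f n = 2 λ_{n+2} - λ_n / 2`. For `r ≤ s` the increments `λ_k(s) - λ_k(r)` are nonnegative and,
the layers being disjoint, sum to at most `s - r`; hence their squares also sum to at most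
`(s - r)²`. Since `(2a - b/2)² ≤ 4a² + b²/4` for `a, b ≥ 0`, summing over `n` gives
`∑ₙ (fₙ s - fₙ r)² ≤ (4 + 1/4)(s - r)²`, and `|‖x‖ - ‖y‖| ≤ ‖x - y‖` finishes.
-/

open Finset

section ClippedIncrement

variable {r s : ℝ}

lemma min_sub_min_nonneg (hrs : r ≤ s) (a : ℝ) : 0 ≤ min s a - min r a :=
  sub_nonneg.2 (min_le_min_right a hrs)

lemma min_sub_min_le (hrs : r ≤ s) (a : ℝ) : min s a - min r a ≤ s - r := by
  simp only [min_def]; split_ifs <;> linarith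

lemma min_sub_min_mono (hrs : r ≤ s) {a b : ℝ} (hab : a ≤ b) :
    min s a - min r a ≤ min s b - min r b := by
  simp only [min_def]; split_ifs <;> linarith

end ClippedIncrement

section Layers

variable {c : ℕ → ℝ} {r s : ℝ}

/-- For antitone `c`, `layer c k t` is the length of `(-∞, t] ∩ [c (k + 1), c k]`. -/
noncomputable def layer (c : ℕ → ℝ) (k : ℕ) (t : ℝ) : ℝ := min t (c k) - min t (c (k + 1))

lemma layer_sub_layer_eq (k : ℕ) (r s : ℝ) :
    layer c k s - layer c k r =
      (min s (c k) - min r (c k)) - (min s (c (k + 1)) - min r (c (k + 1))) := by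
  unfold layer; ring

lemma layer_sub_layer_nonneg (hc : Antitone c) (hrs : r ≤ s) (k : ℕ) :
    0 ≤ layer c k s - layer c k r := by
  rw [layer_sub_layer_eq, sub_nonneg]
  exact min_sub_min_mono hrs (hc k.le_succ)

/-- The increments over `range N` telescope, the layers `0, …, N - 1` tiling `[c N, c 0]`. -/
lemma sum_layer_sub_layer_le (hc : Antitone c) (hrs : r ≤ s) (S : Finset ℕ) :
    ∑ k ∈ S, (layer c k s - layer c k r) ≤ s - r := by
  obtain ⟨N, hSN⟩ := S.exists_nat_subset_range
  calc ∑ k ∈ S, (layer c k s - layer c k r)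
      ≤ ∑ k ∈ range N, (layer c k s - layer c k r) :=
        sum_le_sum_of_subset_of_nonneg hSN fun k _ _ ↦ layer_sub_layer_nonneg hc hrs k
    _ = (min s (c 0) - min r (c 0)) - (min s (c N) - min r (c N)) := by
        simp only [layer_sub_layer_eq]
        exact sum_range_sub' (fun k ↦ min s (c k) - min r (c k)) N
    _ ≤ s - r := by
        linarith [min_sub_min_le hrs (c 0), min_sub_min_nonneg hrs (c N)]

lemma sum_sq_layer_sub_layer_le (hc : Antitone c) (hrs : r ≤ s) (S : Finset ℕ) :
    ∑ k ∈ S, (layer c k s - layer c k r) ^ 2 ≤ (s - r) ^ 2 :=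
  (sum_sq_le_sq_sum_of_nonneg fun k _ ↦ layer_sub_layer_nonneg hc hrs k).trans <|
    pow_le_pow_left₀ (sum_nonneg fun k _ ↦ layer_sub_layer_nonneg hc hrs k)
      (sum_layer_sub_layer_le hc hrs S) 2

end Layers

noncomputable def dyadic (k : ℕ) : ℝ := (2 : ℝ) ^ (-(k : ℤ) + 2)

lemma dyadic_antitone : Antitone dyadic := fun i j hij ↦
  zpow_le_zpow_right₀ (by norm_num) (by omega)

lemma f_eq_layer (n : ℕ) (t : ℝ) :
    f n t = 2 * layer dyadic (n + 2) t - layer dyadic n t / 2 := by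
  have pow_eq : ∀ j : ℕ, (2 : ℝ) ^ (-(n : ℤ) - 1 + j) = 2 ^ j * 2 ^ (-(n : ℤ) - 1) := fun j ↦ by
    rw [zpow_add₀ two_ne_zero, zpow_natCast, mul_comm]
  have e1 : (2 : ℝ) ^ (-(n : ℤ)) = 2 * 2 ^ (-(n : ℤ) - 1) := by simpa using pow_eq 1
  have e2 : (2 : ℝ) ^ (-(n : ℤ) + 1) = 4 * 2 ^ (-(n : ℤ) - 1) := by
    convert pow_eq 2 using 2 <;> push_cast <;> ring
  have e3 : (2 : ℝ) ^ (-(n : ℤ) + 2) = 8 * 2 ^ (-(n : ℤ) - 1) := by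
    convert pow_eq 3 using 2 <;> push_cast <;> ring
  have d0 : dyadic n = (2 : ℝ) ^ (-(n : ℤ) + 2) := rfl
  have d1 : dyadic (n + 1) = (2 : ℝ) ^ (-(n : ℤ) + 1) := by unfold dyadic; push_cast; ring_nf
  have d2 : dyadic (n + 2) = (2 : ℝ) ^ (-(n : ℤ)) := by unfold dyadic; push_cast; ring_nf
  have d3 : dyadic (n + 3) = (2 : ℝ) ^ (-(n : ℤ) - 1) := by unfold dyadic; push_cast; ring_nf
  have hq : (0 : ℝ) < 2 ^ (-(n : ℤ) - 1) := by positivity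
  rw [f, layer, layer, d0, d1, d2, d3, e1, e2, e3]
  generalize (2 : ℝ) ^ (-(n : ℤ) - 1) = q at hq ⊢
  simp only [min_def]
  split_ifs <;> grind

lemma f_sub_f_eq (n : ℕ) (r s : ℝ) :
    f n s - f n r = 2 * (layer dyadic (n + 2) s - layer dyadic (n + 2) r) -
      (layer dyadic n s - layer dyadic n r) / 2 := by
  rw [f_eq_layer, f_eq_layer]; ring

lemma sum_sq_f_sub_f_le_of_le {r s : ℝ} (hrs : r ≤ s) (S : Finset ℕ) :
    ∑ n ∈ S, (f n s - f n r) ^ 2 ≤ 17 / 4 * (s - r) ^ 2 := by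
  set B : ℕ → ℝ := fun k ↦ layer dyadic k s - layer dyadic k r
  have hB : ∀ k, 0 ≤ B k := layer_sub_layer_nonneg dyadic_antitone hrs
  have hB2 : ∀ S : Finset ℕ, ∑ k ∈ S, B k ^ 2 ≤ (s - r) ^ 2 :=
    sum_sq_layer_sub_layer_le dyadic_antitone hrs
  calc ∑ n ∈ S, (f n s - f n r) ^ 2 = ∑ n ∈ S, (2 * B (n + 2) - B n / 2) ^ 2 := by
        simp only [f_sub_f_eq, B]
    _ ≤ ∑ n ∈ S, (4 * B (n + 2) ^ 2 + B n ^ 2 / 4) :=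
        sum_le_sum fun n _ ↦ by nlinarith [mul_nonneg (hB (n + 2)) (hB n)]
    _ = 4 * ∑ k ∈ S.map (addRightEmbedding 2), B k ^ 2 + (∑ n ∈ S, B n ^ 2) / 4 := by
        rw [sum_add_distrib, sum_map, mul_sum, sum_div]; rfl
    _ ≤ 4 * (s - r) ^ 2 + (s - r) ^ 2 / 4 := by gcongr <;> exact hB2 _
    _ = 17 / 4 * (s - r) ^ 2 := by ring

lemma sum_sq_f_sub_f_le (r s : ℝ) (S : Finset ℕ) :
    ∑ n ∈ S, (f n s - f n r) ^ 2 ≤ 17 / 4 * (s - r) ^ 2 := by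
  rcases le_total r s with hrs | hsr
  · exact sum_sq_f_sub_f_le_of_le hrs S
  · convert sum_sq_f_sub_f_le_of_le hsr S using 1
    · exact sum_congr rfl fun n _ ↦ by ring
    · ring

lemma lp.norm_le_of_forall_sum_sq_le {ι : Type*} {w : lp (fun _ : ι ↦ ℝ) 2} {C : ℝ}
    (hC : 0 ≤ C) (h : ∀ S : Finset ι, ∑ i ∈ S, w i ^ 2 ≤ C ^ 2) : ‖w‖ ≤ C :=
  lp.norm_le_of_forall_sum_le (by norm_num) hC fun S ↦ by
    simpa only [ENNReal.toReal_ofNat, Real.rpow_ofNat, Real.norm_eq_abs, sq_abs] using h S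

/-- The operator `T x = Σₙ f n (‖x‖) eₙ` is globally Lipschitz with constant `√17 / 2`. -/
theorem T_lipschitz (T : l2 → l2) (hT : ∀ (x : l2) (n : ℕ), T x n = f (n + 1) ‖x‖) :
    ∀ x y : l2, ‖T x - T y‖ ≤ Real.sqrt 17 / 2 * ‖x - y‖ := by
  intro x y
  refine lp.norm_le_of_forall_sum_sq_le (by positivity) fun S ↦ ?_
  have hxy := abs_le.1 (abs_norm_sub_norm_le x y)
  calc ∑ i ∈ S, (T x - T y) i ^ 2
      = ∑ n ∈ S.map (addRightEmbedding 1), (f n ‖x‖ - f n ‖y‖) ^ 2 := by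
        simp only [sum_map, lp.coeFn_sub, Pi.sub_apply, hT, addRightEmbedding_apply]
    _ ≤ 17 / 4 * (‖x‖ - ‖y‖) ^ 2 := sum_sq_f_sub_f_le _ _ _
    _ ≤ 17 / 4 * ‖x - y‖ ^ 2 := by gcongr 17 / 4 * ?_; exact sq_le_sq' hxy.1 hxy.2
    _ = (Real.sqrt 17 / 2 * ‖x - y‖) ^ 2 := by
        rw [mul_pow, div_pow, Real.sq_sqrt (by norm_num)]; ring
end

section
/- For every x ∈ ℓ² with ‖x‖ ≤ 1, the operator T satisfies ‖T(x)‖ ≥ ‖x‖/2. -/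
lemma f_eq_of_mid (m : ℕ) (t : ℝ) (h1 : (2:ℝ)^(-(m:ℤ)) ≤ t) (h2 : t ≤ (2:ℝ)^(-(m:ℤ)+1)) :
    f m t = (2:ℝ)^(-(m:ℤ)) := by
  have hpos : (0:ℝ) < (2:ℝ)^(-(m:ℤ)) := by positivity
  have e1 : (2:ℝ)^(-(m:ℤ)-1) = (2:ℝ)^(-(m:ℤ)) / 2 := by
    rw [zpow_sub₀ (by norm_num : (2:ℝ) ≠ 0)]; norm_num
  have e2 : (2:ℝ)^(-(m:ℤ)+1) = (2:ℝ)^(-(m:ℤ)) * 2 := by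
    rw [zpow_add₀ (by norm_num : (2:ℝ) ≠ 0)]; norm_num
  have e3 : (2:ℝ)^(-(m:ℤ)+2) = (2:ℝ)^(-(m:ℤ)) * 4 := by
    rw [zpow_add₀ (by norm_num : (2:ℝ) ≠ 0)]; norm_num
  unfold f
  rw [if_neg, ]
  · by_cases hc : t ≤ (2:ℝ)^(-(m:ℤ))
    · rw [if_pos hc]
      have : t = (2:ℝ)^(-(m:ℤ)) := le_antisymm hc h1
      rw [this, e1]; ring
    · rw [if_neg hc, if_pos h2]
  · push_neg
    constructor
    · rw [e1]; linarith
    · rw [e3]; linarith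

/-- For `‖x‖ ≤ 1` the operator `T` satisfies `‖T x‖ ≥ ‖x‖ / 2`. -/
theorem T_lower_bound (T : l2 → l2) (hT : ∀ (x : l2) (n : ℕ), T x n = f (n + 1) ‖x‖) :
    ∀ x : l2, ‖x‖ ≤ 1 → ‖T x‖ ≥ ‖x‖ / 2 := by
  intro x hx
  by_cases h0 : ‖x‖ = 0
  · rw [h0]; simpa using norm_nonneg (T x)
  · set t := ‖x‖ with ht
    have htpos : 0 < t := lt_of_le_of_ne (norm_nonneg x) (Ne.symm h0)
    have hex : ∃ n : ℕ, (2:ℝ)^(-(n:ℤ)) ≤ t := by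
      obtain ⟨n, hn⟩ := exists_pow_lt_of_lt_one htpos (by norm_num : (1/2:ℝ) < 1)
      refine ⟨n, le_of_lt ?_⟩
      calc (2:ℝ)^(-(n:ℤ)) = (1/2:ℝ)^n := by
            rw [zpow_neg, zpow_natCast, one_div, inv_pow]
        _ < t := hn
    classical
    set m : ℕ := max (Nat.find hex) 1 with hm
    have hm1 : 1 ≤ m := le_max_right _ _
    have h1 : (2:ℝ)^(-(m:ℤ)) ≤ t := by
      have hfind := Nat.find_spec hex
      have hle : (Nat.find hex : ℤ) ≤ (m : ℤ) := by exact_mod_cast le_max_left _ _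
      calc (2:ℝ)^(-(m:ℤ)) ≤ (2:ℝ)^(-(Nat.find hex : ℤ)) := by
            apply zpow_le_zpow_right₀ (by norm_num : (1:ℝ) ≤ 2); omega
        _ ≤ t := hfind
    have h2 : t ≤ (2:ℝ)^(-(m:ℤ)+1) := by
      rcases le_or_gt (Nat.find hex) 1 with hc | hc
      · have : m = 1 := by omega
        rw [this]; norm_num; exact hx
      · have hmf : m = Nat.find hex := by omega
        have hlt := Nat.find_min hex (m := Nat.find hex - 1) (by omega)
        push_neg at hlt
        have : (((Nat.find hex - 1 : ℕ)) : ℤ) = -( -(m:ℤ)+1) := by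
          rw [hmf]; push_cast [Nat.cast_sub (by omega : 1 ≤ Nat.find hex)]; ring
        calc t ≤ (2:ℝ)^(-((Nat.find hex - 1 : ℕ):ℤ)) := le_of_lt hlt
          _ = (2:ℝ)^(-(m:ℤ)+1) := by rw [this]; ring_nf
    have hfm : f m t = (2:ℝ)^(-(m:ℤ)) := f_eq_of_mid m t h1 h2
    have hcoord : ‖(T x) (m-1)‖ ≤ ‖T x‖ :=
      lp.norm_apply_le_norm (by norm_num) (T x) (m-1)
    have hval : T x (m-1) = f m t := by
      have := hT x (m-1)
      rwa [Nat.sub_add_cancel hm1] at this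
    have habs : ‖(T x) (m-1)‖ = (2:ℝ)^(-(m:ℤ)) := by
      rw [hval, hfm, Real.norm_eq_abs, abs_of_pos (by positivity)]
    have e2 : (2:ℝ)^(-(m:ℤ)+1) = (2:ℝ)^(-(m:ℤ)) * 2 := by
      rw [zpow_add₀ (by norm_num : (2:ℝ) ≠ 0)]; norm_num
    rw [ge_iff_le]
    calc t / 2 ≤ (2:ℝ)^(-(m:ℤ)) := by rw [e2] at h2; linarith
      _ = ‖(T x) (m-1)‖ := habs.symm
      _ ≤ ‖T x‖ := hcoord
end

section
/- Let B : ℓ² → ℓ² be defined by B(x) = x + αT(x) with |α| ≤ 2/√17, and for m ≥ 1 set B_m(x) := m B(x/m) = x + α m T(x/m). Then each B_m is Lipschitz continuous and monotone. -/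
open Finset

noncomputable def clamp (a b x : ℝ) : ℝ := min (max x a) b

lemma clamp_mono (a b : ℝ) : Monotone (clamp a b) :=
  fun _ _ h => min_le_min (max_le_max h le_rfl) le_rfl

lemma clamp_sub_clamp_le (a b : ℝ) {s t : ℝ} (h : s ≤ t) : clamp a b t - clamp a b s ≤ t - s := by
  unfold clamp; simp only [min_def, max_def]; split_ifs <;> linarith

lemma clamp_add_clamp {a b c : ℝ} (hab : a ≤ b) (hbc : b ≤ c) (x : ℝ) :
    clamp a b x + clamp b c x = clamp a c x + b := by
  unfold clamp; simp only [min_def, max_def]; split_ifs <;> linarith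

lemma sum_range_clamp_sub {a : ℕ → ℝ} (ha : Antitone a) (s t : ℝ) (N : ℕ) :
    ∑ n ∈ range N, (clamp (a (n+1)) (a n) t - clamp (a (n+1)) (a n) s) =
      clamp (a N) (a 0) t - clamp (a N) (a 0) s := by
  induction N with
  | zero => simp [clamp]
  | succ N ih =>
    have hN := ha N.le_succ
    have h0 := ha N.zero_le
    rw [sum_range_succ, ih]
    linarith [clamp_add_clamp hN h0 s, clamp_add_clamp hN h0 t]

lemma sum_clamp_sub_le {a : ℕ → ℝ} (ha : Antitone a) {s t : ℝ} (hst : s ≤ t) (S : Finset ℕ) :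
    ∑ n ∈ S, (clamp (a (n+1)) (a n) t - clamp (a (n+1)) (a n) s) ≤ t - s := by
  obtain ⟨N, hSN⟩ := S.exists_nat_subset_range
  calc _ ≤ ∑ n ∈ range N, (clamp (a (n+1)) (a n) t - clamp (a (n+1)) (a n) s) :=
        sum_le_sum_of_subset_of_nonneg hSN fun n _ _ => sub_nonneg.2 (clamp_mono _ _ hst)
    _ = clamp (a N) (a 0) t - clamp (a N) (a 0) s := sum_range_clamp_sub ha s t N
    _ ≤ t - s := clamp_sub_clamp_le _ _ hst

noncomputable def dyadicPt (e : ℤ) (k : ℕ) : ℝ := 2 ^ (e - k)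

lemma antitone_dyadicPt (e : ℤ) : Antitone (dyadicPt e) :=
  fun _ _ h => zpow_le_zpow_right₀ one_le_two (by omega)

lemma dyadicPt_eq_two_mul_succ (e : ℤ) (k : ℕ) : dyadicPt e k = 2 * dyadicPt e (k+1) := by
  unfold dyadicPt; rw [← zpow_one_add₀ two_ne_zero]; push_cast; ring_nf

lemma f_succ_eq (n : ℕ) (t : ℝ) :
    f (n+1) t = 2 * (clamp (dyadicPt (-1) (n+1)) (dyadicPt (-1) n) t - dyadicPt (-1) (n+1))
      - (1/2) * (clamp (dyadicPt 1 (n+1)) (dyadicPt 1 n) t - dyadicPt 1 (n+1)) := by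
  have p₁ : (2:ℝ) ^ (-((n+1:ℕ):ℤ) - 1) = dyadicPt (-1) (n+1) := by unfold dyadicPt; ring_nf
  have p₂ : (2:ℝ) ^ (-((n+1:ℕ):ℤ)) = dyadicPt (-1) n := by unfold dyadicPt; push_cast; ring_nf
  have p₃ : (2:ℝ) ^ (-((n+1:ℕ):ℤ) + 1) = dyadicPt 1 (n+1) := by unfold dyadicPt; ring_nf
  have p₄ : (2:ℝ) ^ (-((n+1:ℕ):ℤ) + 2) = dyadicPt 1 n := by unfold dyadicPt; push_cast; ring_nf
  have h₂ := dyadicPt_eq_two_mul_succ (-1) n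
  have h₃ : dyadicPt 1 (n+1) = 2 * dyadicPt (-1) n := by
    unfold dyadicPt; rw [← zpow_one_add₀ two_ne_zero]; push_cast; ring_nf
  have h₄ := dyadicPt_eq_two_mul_succ 1 n
  have h₁ : 0 < dyadicPt (-1) (n+1) := by unfold dyadicPt; positivity
  rw [f, p₁, p₂, p₃, p₄, ite_or]
  unfold clamp
  split_ifs <;> simp only [min_def, max_def] <;> split_ifs <;> linarith

lemma sq_two_mul_sub_half_mul_le {d u v : ℝ} (hu₀ : 0 ≤ u) (hu : u ≤ d) (hv₀ : 0 ≤ v)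
    (hv : v ≤ d) :
    (2 * u - (1/2) * v) ^ 2 ≤ 4 * d * u + (1/4) * d * v := by
  nlinarith [mul_nonneg hu₀ hv₀, mul_nonneg (sub_nonneg.2 hu) hu₀, mul_nonneg (sub_nonneg.2 hv) hv₀]

lemma sum_sq_f_succ_sub_le_of_le {s t : ℝ} (hst : s ≤ t) (S : Finset ℕ) :
    ∑ n ∈ S, (f (n+1) t - f (n+1) s) ^ 2 ≤ (17/4) * (t - s) ^ 2 := by
  set Δ : ℤ → ℕ → ℝ := fun e n =>
    clamp (dyadicPt e (n+1)) (dyadicPt e n) t - clamp (dyadicPt e (n+1)) (dyadicPt e n) s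
  have hf : ∀ n, f (n+1) t - f (n+1) s = 2 * Δ (-1) n - (1/2) * Δ 1 n := fun n => by
    simp only [Δ, f_succ_eq]; ring
  have hΔ₀ : ∀ e n, 0 ≤ Δ e n := fun e n => sub_nonneg.2 (clamp_mono _ _ hst)
  have hΔ : ∀ e n, Δ e n ≤ t - s := fun e n => clamp_sub_clamp_le _ _ hst
  have hsum : ∀ e, ∑ n ∈ S, Δ e n ≤ t - s := fun e =>
    sum_clamp_sub_le (antitone_dyadicPt e) hst S
  calc ∑ n ∈ S, (f (n+1) t - f (n+1) s) ^ 2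
      ≤ ∑ n ∈ S, (4 * (t - s) * Δ (-1) n + (1/4) * (t - s) * Δ 1 n) :=
        sum_le_sum fun n _ => hf n ▸
          sq_two_mul_sub_half_mul_le (hΔ₀ _ n) (hΔ _ n) (hΔ₀ _ n) (hΔ _ n)
    _ = 4 * (t - s) * ∑ n ∈ S, Δ (-1) n + (1/4) * (t - s) * ∑ n ∈ S, Δ 1 n := by
        rw [sum_add_distrib, mul_sum, mul_sum]
    _ ≤ 4 * (t - s) * (t - s) + (1/4) * (t - s) * (t - s) := by
        have hd : 0 ≤ t - s := sub_nonneg.2 hst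
        gcongr <;> exact hsum _
    _ = (17/4) * (t - s) ^ 2 := by ring

lemma sum_sq_f_succ_sub_le (s t : ℝ) (S : Finset ℕ) :
    ∑ n ∈ S, (f (n+1) t - f (n+1) s) ^ 2 ≤ (17/4) * (t - s) ^ 2 := by
  rcases le_total s t with hst | hts
  · exact sum_sq_f_succ_sub_le_of_le hst S
  · simpa only [sub_sq_comm] using sum_sq_f_succ_sub_le_of_le hts S

lemma lipschitzWith_of_apply_eq_f_succ {T : l2 → l2}
    (hT : ∀ (x : l2) (n : ℕ), T x n = f (n + 1) ‖x‖) : LipschitzWith (NNReal.sqrt 17 / 2) T := by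
  refine LipschitzWith.of_dist_le_mul fun x y => ?_
  simp only [dist_eq_norm, NNReal.coe_div, Real.coe_sqrt, NNReal.coe_ofNat]
  have hC : (Real.sqrt 17 / 2 * ‖x - y‖) ^ 2 = (17/4) * ‖x - y‖ ^ 2 := by
    rw [mul_pow, div_pow, Real.sq_sqrt (by norm_num)]; norm_num
  refine lp.norm_le_of_forall_sum_le (by norm_num) (by positivity) fun S => ?_
  simp only [ENNReal.toReal_ofNat, Real.rpow_two, Real.norm_eq_abs, sq_abs, lp.coeFn_sub,
    Pi.sub_apply, hT]
  calc ∑ n ∈ S, (f (n+1) ‖x‖ - f (n+1) ‖y‖) ^ 2 ≤ (17/4) * (‖x‖ - ‖y‖) ^ 2 :=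
        sum_sq_f_succ_sub_le _ _ S
    _ ≤ (17/4) * ‖x - y‖ ^ 2 := by
        rw [← sq_abs (‖x‖ - ‖y‖)]; gcongr; exact abs_norm_sub_norm_le x y
    _ = _ := hC.symm

lemma LipschitzWith.smul_comp_inv_smul {𝕜 E F : Type*} [NormedField 𝕜] [SeminormedAddCommGroup E]
    [NormedSpace 𝕜 E] [SeminormedAddCommGroup F] [NormedSpace 𝕜 F] {K : NNReal} {T : E → F}
    (hT : LipschitzWith K T) (a c : 𝕜) :
    LipschitzWith (‖a‖₊ * K) fun x => (a * c) • T (c⁻¹ • x) := by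
  refine ((lipschitzWith_smul (a * c)).comp (hT.comp (lipschitzWith_smul c⁻¹))).weaken ?_
  calc ‖a * c‖₊ * (K * ‖c⁻¹‖₊) = ‖a‖₊ * K * ‖c * c⁻¹‖₊ := by
        rw [nnnorm_mul, nnnorm_mul]; ring
    _ ≤ ‖a‖₊ * K :=
        mul_le_of_le_one_right' (by rcases eq_or_ne c 0 with rfl | hc <;> simp [*])

lemma LipschitzWith.inner_add_sub_add_nonneg {E : Type*} [NormedAddCommGroup E]
    [InnerProductSpace ℝ E] {g : E → E} (hg : LipschitzWith 1 g) (x y : E) :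
    0 ≤ inner ℝ ((x + g x) - (y + g y)) (x - y) := by
  have hCS : -(‖g x - g y‖ * ‖x - y‖) ≤ inner ℝ (g x - g y) (x - y) :=
    neg_le_of_abs_le (abs_real_inner_le_norm _ _)
  have hg' : ‖g x - g y‖ ≤ ‖x - y‖ := by simpa using hg.norm_sub_le x y
  rw [add_sub_add_comm, inner_add_left, real_inner_self_eq_norm_sq]
  nlinarith [norm_nonneg (x - y)]

theorem Bm_lipschitz_monotone_general
    (T : l2 → l2) (hT : ∀ (x : l2) (n : ℕ), T x n = f (n + 1) ‖x‖)
    (α : ℝ) (hα : |α| ≤ 2 / Real.sqrt 17)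
    (m : ℕ)
    (Bm : l2 → l2) (hBm : ∀ x : l2, Bm x = x + (α * m) • T ((m:ℝ)⁻¹ • x)) :
    (∃ K : ℝ, ∀ x y : l2, ‖Bm x - Bm y‖ ≤ K * ‖x - y‖) ∧
    (∀ x y : l2, (inner ℝ (Bm x - Bm y) (x - y) : ℝ) ≥ 0) := by
  have hg : LipschitzWith 1 fun x : l2 => (α * m) • T ((m:ℝ)⁻¹ • x) := by
    refine ((lipschitzWith_of_apply_eq_f_succ hT).smul_comp_inv_smul α m).weaken ?_
    rw [← NNReal.coe_le_coe]
    push_cast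
    rw [Real.norm_eq_abs, ← le_div_iff₀ (by positivity), one_div_div]
    exact hα
  refine ⟨⟨2, fun x y => ?_⟩, fun x y => ?_⟩
  · simpa [hBm, one_add_one_eq_two] using (LipschitzWith.id.add hg).norm_sub_le x y
  · rw [hBm, hBm]
    exact hg.inner_add_sub_add_nonneg x y

/-- Each `B_m x = x + α m T (x / m)` is Lipschitz continuous and monotone. -/
theorem Bm_lipschitz_monotone
    (T : l2 → l2) (hT : ∀ (x : l2) (n : ℕ), T x n = f (n + 1) ‖x‖)
    (α : ℝ) (hα : |α| ≤ 2 / Real.sqrt 17)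
    (m : ℕ) (hm : 1 ≤ m)
    (Bm : l2 → l2) (hBm : ∀ x : l2, Bm x = x + (α * m) • T ((m:ℝ)⁻¹ • x)) :
    (∃ K : ℝ, ∀ x y : l2, ‖Bm x - Bm y‖ ≤ K * ‖x - y‖) ∧
    (∀ x y : l2, (inner ℝ (Bm x - Bm y) (x - y) : ℝ) ≥ 0) :=
  Bm_lipschitz_monotone_general T hT α hα m Bm hBm
end

section
/- With B_m(x) := x + α m T(x/m) as above (0 < |α| ≤ 2/√17), the graphical outer limit of the graphs of B_m as m → ∞ consists only of the point (0,0): if x_{m_k} → x and B_{m_k}(x_{m_k}) → y for some subsequence m_k → ∞, then x = y = 0. -/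
/-- For `0 < t ≤ 1` there is a coordinate where `f (n+1) t ≥ t/2`. -/
lemma exists_coord {t : ℝ} (ht : 0 < t) (ht1 : t ≤ 1) :
    ∃ n : ℕ, t / 2 ≤ f (n + 1) t := by
  classical
  have hex : ∃ n : ℕ, (2:ℝ)^(-(n:ℤ)-1) < t := by
    obtain ⟨n, hn⟩ := exists_pow_lt_of_lt_one ht (by norm_num : (1/2:ℝ) < 1)
    refine ⟨n, lt_of_le_of_lt ?_ hn⟩
    have h2 : (2:ℝ)^(-(n:ℤ)-1) = (1/2:ℝ)^(n+1) := by
      rw [one_div, inv_pow, ← zpow_natCast, ← zpow_neg]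
      congr 1; push_cast; ring
    rw [h2]
    exact pow_le_pow_of_le_one (by norm_num) (by norm_num) (Nat.le_succ n)
  set n0 := Nat.find hex with hn0
  have h1 : (2:ℝ)^(-(n0:ℤ)-1) < t := Nat.find_spec hex
  have h2 : t ≤ (2:ℝ)^(-(n0:ℤ)) := by
    rcases Nat.eq_zero_or_pos n0 with h | h
    · rw [h]; simpa using ht1
    · have hmin := Nat.find_min hex (m := n0 - 1) (by omega)
      push_neg at hmin
      have he : (-(↑(n0-1):ℤ)-1) = -(n0:ℤ) := by
        have : (↑(n0-1):ℤ) = (n0:ℤ) - 1 := by omega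
        rw [this]; ring
      rwa [he] at hmin
  refine ⟨n0, ?_⟩
  have e1 : (-(↑(n0+1):ℤ) - 1) = -(n0:ℤ) - 2 := by push_cast; ring
  have e2 : (-(↑(n0+1):ℤ) + 2) = -(n0:ℤ) + 1 := by push_cast; ring
  have e4 : (-(↑(n0+1):ℤ) + 1) = -(n0:ℤ) := by push_cast; ring
  have e3 : (-(↑(n0+1):ℤ)) = -(n0:ℤ) - 1 := by push_cast; ring
  have hmono : ∀ a b : ℤ, a < b → (2:ℝ)^a < (2:ℝ)^b := fun a b hab =>
    zpow_lt_zpow_right₀ (by norm_num) hab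
  have hA : ¬(t ≤ (2:ℝ)^(-(n0:ℤ)-2) ∨ (2:ℝ)^(-(n0:ℤ)+1) ≤ t) := by
    push_neg
    constructor
    · exact lt_trans (hmono _ _ (by omega)) h1
    · exact lt_of_le_of_lt h2 (hmono _ _ (by omega))
  have hB : ¬(t ≤ (2:ℝ)^(-(n0:ℤ)-1)) := not_le.mpr h1
  unfold f
  rw [e1, e2, e4, e3, if_neg hA, if_neg hB, if_pos h2]
  have hval : (2:ℝ)^(-(n0:ℤ)-1) * 2 = (2:ℝ)^(-(n0:ℤ)) := by
    rw [← zpow_add_one₀ (two_ne_zero)]; ring_nf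
  rw [div_le_iff₀ (by norm_num : (0:ℝ) < 2)]
  linarith [h2, hval]

lemma f_eq_zero {n : ℕ} {t : ℝ} (h : t ≤ (2:ℝ)^(-(n:ℤ)-2)) : f (n+1) t = 0 := by
  have hc : t ≤ (2:ℝ)^(-(↑(n+1):ℤ)-1) ∨ (2:ℝ)^(-(↑(n+1):ℤ)+2) ≤ t := by
    left
    have e : (-(↑(n+1):ℤ) - 1) = -(n:ℤ)-2 := by push_cast; ring
    rw [e]; exact h
  unfold f; rw [if_pos hc]

/-- The graphical outer limit of the graphs of `B_m` consists only of `(0,0)`: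
if `x_{m_k} → x` and `B_{m_k}(x_{m_k}) → y` along a subsequence `m_k → ∞`, then
`x = y = 0`. -/
theorem graphical_outer_limit
    (T : l2 → l2) (hT : ∀ (x : l2) (n : ℕ), T x n = f (n + 1) ‖x‖)
    (α : ℝ) (hα0 : α ≠ 0) (hα : |α| ≤ 2 / Real.sqrt 17)
    (B : ℕ → l2 → l2)
    (hB : ∀ (m : ℕ) (x : l2), B m x = x + (α * m) • T ((m:ℝ)⁻¹ • x))
    (mk : ℕ → ℕ) (hmk : Filter.Tendsto mk Filter.atTop Filter.atTop)
    (xk : ℕ → l2) (x y : l2)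
    (hx : Filter.Tendsto xk Filter.atTop (nhds x))
    (hy : Filter.Tendsto (fun k => B (mk k) (xk k)) Filter.atTop (nhds y)) :
    x = 0 ∧ y = 0 := by
  classical
  have hd : Filter.Tendsto (fun k => B (mk k) (xk k) - xk k) Filter.atTop (nhds (y - x)) :=
    hy.sub hx
  have hxn : Filter.Tendsto (fun k => ‖xk k‖) Filter.atTop (nhds ‖x‖) := hx.norm
  have hxb : ∀ᶠ k in Filter.atTop, ‖xk k‖ ≤ ‖x‖ + 1 :=
    hxn.eventually_le_const (lt_add_one _)
  have hdiff : ∀ k, B (mk k) (xk k) - xk k = (α * mk k) • T (((mk k : ℝ))⁻¹ • xk k) := by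
    intro k; rw [hB]; exact add_sub_cancel_left _ _
  -- Step 1 : y = x   (the perturbation escapes to infinity coordinatewise)
  have hyx : y = x := by
    have hcoord : ∀ n : ℕ, (y - x) n = 0 := by
      intro n
      have hev : ∀ᶠ k in Filter.atTop, (B (mk k) (xk k) - xk k) n = 0 := by
        obtain ⟨C, hC⟩ := exists_nat_ge ((‖x‖ + 1) * 2 ^ (n + 2))
        have hm : ∀ᶠ k in Filter.atTop, ((‖x‖ + 1) * 2 ^ (n + 2) : ℝ) ≤ mk k := by
          filter_upwards [hmk.eventually_ge_atTop C] with k hk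
          exact hC.trans (by exact_mod_cast hk)
        filter_upwards [hm, hxb] with k hk hxk
        rw [hdiff k]
        have hp1 : (0:ℝ) < ‖x‖ + 1 := by positivity
        have hp2 : (0:ℝ) < 2 ^ (n + 2) := by positivity
        have hm0 : (0:ℝ) < mk k := lt_of_lt_of_le (by positivity) hk
        have h22 : (2:ℝ)^(-(n:ℤ)-2) = ((2:ℝ)^(n+2))⁻¹ := by
          rw [← zpow_natCast, ← zpow_neg]; congr 1; push_cast; ring
        have ht : ‖((mk k : ℝ))⁻¹ • xk k‖ ≤ (2:ℝ)^(-(n:ℤ)-2) := by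
          rw [norm_smul, norm_inv, Real.norm_natCast, h22, inv_mul_eq_div,
            div_le_iff₀ hm0]
          calc ‖xk k‖ ≤ ‖x‖ + 1 := hxk
            _ = ((2:ℝ)^(n+2))⁻¹ * ((‖x‖ + 1) * 2 ^ (n + 2)) := by field_simp
            _ ≤ ((2:ℝ)^(n+2))⁻¹ * mk k := by gcongr
            _ = ((2:ℝ)^(n+2))⁻¹ * mk k := rfl
        have hTz : T (((mk k : ℝ))⁻¹ • xk k) n = 0 := by
          rw [hT]; exact f_eq_zero ht
        calc ((α * mk k) • T (((mk k : ℝ))⁻¹ • xk k)) n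
            = (α * mk k) * T (((mk k : ℝ))⁻¹ • xk k) n := by
              rw [lp.coeFn_smul]; rfl
          _ = 0 := by rw [hTz, mul_zero]
      have hten : Filter.Tendsto
          (fun k => ‖(B (mk k) (xk k) - xk k) - (y - x)‖) Filter.atTop (nhds 0) :=
        tendsto_iff_norm_sub_tendsto_zero.mp hd
      have hbnd : ∀ᶠ k in Filter.atTop,
          ‖(y - x) n‖ ≤ ‖(B (mk k) (xk k) - xk k) - (y - x)‖ := by
        filter_upwards [hev] with k hk
        have h1 : ‖((B (mk k) (xk k) - xk k) - (y - x)) n‖ ≤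
            ‖(B (mk k) (xk k) - xk k) - (y - x)‖ :=
          lp.norm_apply_le_norm (by norm_num : (2:ENNReal) ≠ 0) _ n
        rw [lp.coeFn_sub, Pi.sub_apply, hk, zero_sub, norm_neg] at h1
        exact h1
      have h0 : ‖(y - x) n‖ ≤ 0 := ge_of_tendsto hten hbnd
      exact norm_le_zero_iff.mp h0
    have : y - x = 0 := by
      apply lp.ext
      funext n
      simpa using hcoord n
    exact sub_eq_zero.mp this
  -- Step 2 : x = 0   (norm lower bound on the perturbation)
  have hd0 : Filter.Tendsto (fun k => ‖B (mk k) (xk k) - xk k‖) Filter.atTop (nhds 0) := by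
    have := hd.norm
    rw [hyx, sub_self, norm_zero] at this
    exact this
  have hev2 : ∀ᶠ k in Filter.atTop,
      |α| * ‖xk k‖ / 2 ≤ ‖B (mk k) (xk k) - xk k‖ := by
    obtain ⟨C, hC⟩ := exists_nat_ge (‖x‖ + 1)
    filter_upwards [hmk.eventually_ge_atTop (max 1 C), hxb] with k hk hxk
    have hm1 : 1 ≤ mk k := le_trans (le_max_left _ _) hk
    have hm0 : (0:ℝ) < mk k := by exact_mod_cast hm1
    have hmC : (‖x‖ + 1 : ℝ) ≤ mk k :=
      hC.trans (by exact_mod_cast le_trans (le_max_right _ _) hk)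
    set z : l2 := ((mk k : ℝ))⁻¹ • xk k with hz
    have hteq : ‖z‖ = ‖xk k‖ / mk k := by
      rw [hz, norm_smul, norm_inv, Real.norm_natCast, inv_mul_eq_div]
    rcases eq_or_lt_of_le (norm_nonneg (xk k)) with h0 | h0
    · rw [hdiff k, ← h0]
      simpa using norm_nonneg ((α * (mk k : ℝ)) • T z)
    · have ht0 : 0 < ‖z‖ := by
        rw [hteq]; positivity
      have ht1 : ‖z‖ ≤ 1 := by
        rw [hteq, div_le_one hm0]
        linarith
      obtain ⟨n, hn⟩ := exists_coord ht0 ht1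
      have hfn : ‖z‖ / 2 ≤ T z n := by rw [hT]; exact hn
      have habs := lp.norm_apply_le_norm (by norm_num : (2:ENNReal) ≠ 0) (T z) n
      rw [Real.norm_eq_abs] at habs
      have hTn : ‖z‖ / 2 ≤ ‖T z‖ := le_trans (hfn.trans (le_abs_self _)) habs
      rw [hdiff k]
      have hns : ‖(α * (mk k : ℝ)) • T z‖ = |α| * mk k * ‖T z‖ := by
        rw [norm_smul, Real.norm_eq_abs, abs_mul, abs_of_pos hm0]
      rw [hns]
      calc |α| * ‖xk k‖ / 2 = |α| * (mk k : ℝ) * (‖xk k‖ / mk k / 2) := by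
            field_simp
        _ = |α| * (mk k : ℝ) * (‖z‖ / 2) := by rw [hteq]
        _ ≤ |α| * (mk k : ℝ) * ‖T z‖ := by
            have : (0:ℝ) ≤ |α| * (mk k : ℝ) := by positivity
            exact mul_le_mul_of_nonneg_left hTn this
  have hlhs : Filter.Tendsto (fun k => |α| * ‖xk k‖ / 2) Filter.atTop
      (nhds (|α| * ‖x‖ / 2)) := (hxn.const_mul _).div_const _
  have hle : |α| * ‖x‖ / 2 ≤ 0 := le_of_tendsto_of_tendsto hlhs hd0 hev2
  have hαpos : 0 < |α| := abs_pos.mpr hα0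
  have hx0 : ‖x‖ ≤ 0 := by
    nlinarith [norm_nonneg x]
  have hx0' : x = 0 := norm_le_zero_iff.mp hx0
  exact ⟨hx0', by rw [hyx, hx0']⟩
end

section
/- With B_m as above, (0,0) ∈ graph(B_m) for every m, so the graphical (Kuratowski) limit of graph(B_m) as m → ∞ exists and equals {(0,0)}; in particular this limit is the graph of a monotone set-valued operator that is not maximally monotone. -/
/-- A set `G ⊆ H × H` is monotone. -/
def IsMonotoneSet {H : Type*} [NormedAddCommGroup H] [InnerProductSpace ℝ H]
    (G : Set (H × H)) : Prop :=
  ∀ p ∈ G, ∀ q ∈ G, (inner ℝ (p.2 - q.2) (p.1 - q.1) : ℝ) ≥ 0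

/-- A set `G ⊆ H × H` is maximally monotone. -/
def IsMaxMonotoneSet {H : Type*} [NormedAddCommGroup H] [InnerProductSpace ℝ H]
    (G : Set (H × H)) : Prop :=
  IsMonotoneSet G ∧ ∀ G' : Set (H × H), IsMonotoneSet G' → G ⊆ G' → G' = G

/-! The `n`-th coordinate of `B_m x - x` is `α m f_{n+1}(‖x‖ / m)`, which vanishes as soon as
`‖x‖ / m ≤ 2^(-n-2)`. Along convergent graph points `(x_k, B_{m_k} x_k)` with `m_k → ∞` the norms
`‖x_k‖` stay bounded, so each coordinate of `B_{m_k} x_k - x_k` is eventually `0` and the limit lies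
on the diagonal. On the other hand, if `0 < ‖x‖ < m` then `t = ‖x‖ / m` lies on a plateau
`[2^(-j-1), 2^(-j)]` of `f_{j+1}`, where `f_{j+1} = 2^(-j-1) ≥ t / 2`; hence
`‖B_m x - x‖ ≥ |α| ‖x‖ / 2`, and in the limit `|α| ‖x‖ / 2 ≤ ‖y - x‖ = 0`. Finally `{(0,0)}` is
properly contained in the diagonal, which is monotone. -/

open Filter Topology

lemma f_eq_zero_of_le {n : ℕ} {t : ℝ} (ht : t ≤ (2:ℝ)^(-(n:ℤ)-1)) : f n t = 0 := by
  simp [f, ht]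

lemma f_eq_of_mem_Icc {n : ℕ} {t : ℝ} (h₁ : (2:ℝ)^(-(n:ℤ)) ≤ t) (h₂ : t ≤ (2:ℝ)^(-(n:ℤ)+1)) :
    f n t = (2:ℝ)^(-(n:ℤ)) := by
  have hlow : (2:ℝ)^(-(n:ℤ)-1) < t :=
    (zpow_lt_zpow_right₀ one_lt_two (by omega)).trans_le h₁
  have hhigh : t < (2:ℝ)^(-(n:ℤ)+2) :=
    h₂.trans_lt (zpow_lt_zpow_right₀ one_lt_two (by omega))
  have hhalf : (2:ℝ)^(-(n:ℤ)-1) = (2:ℝ)^(-(n:ℤ)) / 2 := by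
    rw [zpow_sub_one₀ two_ne_zero, div_eq_mul_inv]
  unfold f
  rw [if_neg (by push Not; exact ⟨hlow, hhigh⟩)]
  split_ifs with h
  · rw [le_antisymm h h₁, hhalf]; ring
  · rfl

lemma exists_half_le_f_succ {t : ℝ} (h₀ : 0 < t) (h₁ : t < 1) :
    ∃ j : ℕ, t / 2 ≤ f (j + 1) t := by
  set L := Int.log 2 t
  have hL₁ : (2:ℝ)^L ≤ t := by exact_mod_cast Int.zpow_log_le_self one_lt_two h₀
  have hL₂ : t < (2:ℝ)^(L+1) := by exact_mod_cast Int.lt_zpow_succ_log_self one_lt_two t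
  have hL : L < 0 := (zpow_lt_one_iff_right₀ one_lt_two).1 (hL₁.trans_lt h₁)
  obtain ⟨j, hj⟩ : ∃ j : ℕ, -((j + 1 : ℕ) : ℤ) = L := ⟨(-L-1).toNat, by omega⟩
  refine ⟨j, ?_⟩
  rw [f_eq_of_mem_Icc (hj ▸ hL₁) (hj ▸ hL₂.le), hj]
  rw [zpow_add_one₀ two_ne_zero] at hL₂
  linarith

instance : Nontrivial l2 :=
  nontrivial_of_ne (lp.single 2 0 (1:ℝ)) 0 fun h ↦ by
    simpa using congrArg (fun x : l2 ↦ x 0) h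

lemma tendsto_norm_div_natCast_zero {E : Type*} [SeminormedAddCommGroup E] {mk : ℕ → ℕ}
    {xk : ℕ → E} {x : E} (hmk : Tendsto mk atTop atTop) (hx : Tendsto xk atTop (𝓝 x)) :
    Tendsto (fun k ↦ ‖xk k‖ / mk k) atTop (𝓝 0) := by
  simpa [div_eq_mul_inv] using
    hx.norm.mul (tendsto_inv_atTop_zero.comp (tendsto_natCast_atTop_atTop.comp hmk))

section Operator

variable {α : ℝ} {B : ℕ → l2 → l2}

lemma B_apply {T : l2 → l2} (hT : ∀ (x : l2) (n : ℕ), T x n = f (n + 1) ‖x‖)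
    (hB : ∀ (m : ℕ) (x : l2), B m x = x + (α * m) • T ((m:ℝ)⁻¹ • x)) (m : ℕ) (x : l2) (n : ℕ) :
    B m x n = x n + α * m * f (n + 1) (‖x‖ / m) := by
  rw [hB, lp.coeFn_add, lp.coeFn_smul, Pi.add_apply, Pi.smul_apply, hT, norm_smul, norm_inv,
    Real.norm_natCast, smul_eq_mul, inv_mul_eq_div]

lemma B_zero
    (hB : ∀ (m : ℕ) (x : l2) (n : ℕ), B m x n = x n + α * m * f (n + 1) (‖x‖ / m))
    (m : ℕ) : B m 0 = 0 := by
  ext n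
  rw [hB, norm_zero, zero_div, f_eq_zero_of_le (by positivity)]
  simp

lemma B_apply_eq_self
    (hB : ∀ (m : ℕ) (x : l2) (n : ℕ), B m x n = x n + α * m * f (n + 1) (‖x‖ / m))
    {m : ℕ} {x : l2} {n : ℕ} (hx : ‖x‖ / m ≤ (2:ℝ)^(-((n + 1 : ℕ) : ℤ) - 1)) :
    B m x n = x n := by
  rw [hB, f_eq_zero_of_le hx, mul_zero, add_zero]

lemma half_mul_norm_le_norm_B_sub_self
    (hB : ∀ (m : ℕ) (x : l2) (n : ℕ), B m x n = x n + α * m * f (n + 1) (‖x‖ / m))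
    {m : ℕ} {x : l2} (hx : ‖x‖ < m) :
    |α| * ‖x‖ / 2 ≤ ‖B m x - x‖ := by
  rcases (norm_nonneg x).eq_or_lt with hx₀ | hx₀
  · rw [← hx₀]; simp
  have hm : (0:ℝ) < m := hx₀.trans hx
  obtain ⟨j, hj⟩ := exists_half_le_f_succ (div_pos hx₀ hm) ((div_lt_one hm).2 hx)
  calc |α| * ‖x‖ / 2 = |α| * m * (‖x‖ / m / 2) := by field_simp
    _ ≤ |α| * m * f (j + 1) (‖x‖ / m) := by gcongr
    _ = |(B m x - x) j| := by
      rw [lp.coeFn_sub, Pi.sub_apply, hB, add_sub_cancel_left, abs_mul, abs_mul, Nat.abs_cast,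
        abs_of_nonneg ((div_nonneg (by positivity) (by norm_num)).trans hj)]
    _ ≤ ‖B m x - x‖ :=
      (Real.norm_eq_abs _).symm.trans_le (lp.norm_apply_le_norm two_ne_zero _ j)

variable {mk : ℕ → ℕ} {xk : ℕ → l2} {x y : l2}

lemma eq_of_tendsto_graph
    (hB : ∀ (m : ℕ) (x : l2) (n : ℕ), B m x n = x n + α * m * f (n + 1) (‖x‖ / m))
    (hmk : Tendsto mk atTop atTop) (hx : Tendsto xk atTop (𝓝 x))
    (hy : Tendsto (fun k ↦ B (mk k) (xk k)) atTop (𝓝 y)) : y = x := by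
  ext n
  have hev : ∀ᶠ k in atTop, B (mk k) (xk k) n = xk k n :=
    ((tendsto_norm_div_natCast_zero hmk hx).eventually_le_const (by positivity)).mono
      fun k hk ↦ B_apply_eq_self hB hk
  have heval := fun (z : l2) ↦ (lp.lipschitzWith_one_eval 2 n).continuous.tendsto z
  exact tendsto_nhds_unique ((heval y).comp hy)
    (((heval x).comp hx).congr' (hev.mono fun k hk ↦ hk.symm))

lemma eq_zero_of_tendsto_graph (hα : α ≠ 0)
    (hB : ∀ (m : ℕ) (x : l2) (n : ℕ), B m x n = x n + α * m * f (n + 1) (‖x‖ / m))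
    (hmk : Tendsto mk atTop atTop) (hx : Tendsto xk atTop (𝓝 x))
    (hy : Tendsto (fun k ↦ B (mk k) (xk k)) atTop (𝓝 y)) : x = 0 := by
  have hsmall : ∀ᶠ k in atTop, ‖xk k‖ < mk k := by
    filter_upwards [(tendsto_norm_div_natCast_zero hmk hx).eventually_lt_const one_pos,
      hmk.eventually_gt_atTop 0] with k hk hm
    exact (div_lt_one (by exact_mod_cast hm)).1 hk
  have hlim : |α| * ‖x‖ / 2 ≤ ‖y - x‖ :=
    le_of_tendsto_of_tendsto ((hx.norm.const_mul |α|).div_const 2) (hy.sub hx).norm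
      (hsmall.mono fun k hk ↦ half_mul_norm_le_norm_B_sub_self hB hk)
  rw [eq_of_tendsto_graph hB hmk hx hy, sub_self, norm_zero] at hlim
  have : |α| * ‖x‖ ≤ 0 := by linarith
  exact norm_le_zero_iff.1 (nonpos_of_mul_nonpos_right this (abs_pos.2 hα))

end Operator

section MonotoneSet

variable {H : Type*} [NormedAddCommGroup H] [InnerProductSpace ℝ H]

lemma isMonotoneSet_singleton (p : H × H) : IsMonotoneSet {p} := by
  rintro _ rfl _ rfl
  simp

lemma isMonotoneSet_diagonal : IsMonotoneSet {p : H × H | p.2 = p.1} := by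
  rintro p (hp : p.2 = p.1) q (hq : q.2 = q.1)
  rw [hp, hq]
  exact real_inner_self_nonneg

lemma not_isMaxMonotoneSet_singleton_zero [Nontrivial H] :
    ¬ IsMaxMonotoneSet {((0 : H), (0 : H))} := by
  rintro ⟨-, hmax⟩
  obtain ⟨v, hv⟩ := exists_ne (0 : H)
  have hdiag := hmax _ isMonotoneSet_diagonal (by rintro _ rfl; rfl)
  have hvv : (v, v) ∈ {p : H × H | p.2 = p.1} := rfl
  rw [hdiag] at hvv
  exact hv (congrArg Prod.fst hvv)

end MonotoneSet

theorem graphical_limit_not_maximal_general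
    (T : l2 → l2) (hT : ∀ (x : l2) (n : ℕ), T x n = f (n + 1) ‖x‖)
    (α : ℝ) (hα0 : α ≠ 0)
    (B : ℕ → l2 → l2)
    (hB : ∀ (m : ℕ) (x : l2), B m x = x + (α * m) • T ((m:ℝ)⁻¹ • x)) :
    (∀ m : ℕ, ((0, 0) : l2 × l2) ∈ {p : l2 × l2 | p.2 = B m p.1}) ∧
    -- outer limit ⊆ {(0,0)}
    (∀ (mk : ℕ → ℕ), Filter.Tendsto mk Filter.atTop Filter.atTop →
      ∀ pk : ℕ → l2 × l2, (∀ k, pk k ∈ {p : l2 × l2 | p.2 = B (mk k) p.1}) →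
      ∀ p : l2 × l2, Filter.Tendsto pk Filter.atTop (nhds p) → p = (0, 0)) ∧
    -- {(0,0)} ⊆ inner limit
    (∃ pk : ℕ → l2 × l2, (∀ m, pk m ∈ {p : l2 × l2 | p.2 = B m p.1}) ∧
      Filter.Tendsto pk Filter.atTop (nhds ((0, 0) : l2 × l2))) ∧
    IsMonotoneSet ({((0 : l2), (0 : l2))} : Set (l2 × l2)) ∧
    ¬ IsMaxMonotoneSet ({((0 : l2), (0 : l2))} : Set (l2 × l2)) := by
  have hB' := B_apply hT hB
  have hgraph (m : ℕ) : ((0, 0) : l2 × l2) ∈ {p : l2 × l2 | p.2 = B m p.1} := (B_zero hB' m).symm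
  refine ⟨hgraph, ?_, ⟨fun _ ↦ (0, 0), hgraph, tendsto_const_nhds⟩, isMonotoneSet_singleton _,
    not_isMaxMonotoneSet_singleton_zero⟩
  intro mk hmk pk hpk p hp
  have hx := hp.fst_nhds
  have hy : Tendsto (fun k ↦ B (mk k) (pk k).1) atTop (𝓝 p.2) :=
    hp.snd_nhds.congr fun k ↦ hpk k
  have hx0 := eq_zero_of_tendsto_graph hα0 hB' hmk hx hy
  exact Prod.ext hx0 ((eq_of_tendsto_graph hB' hmk hx hy).trans hx0)

/-- `(0,0) ∈ graph B_m` for every `m`, the Kuratowski (graphical) limit of the graphs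
of the `B_m` exists and equals `{(0,0)}` — every point of the outer limit is `(0,0)`
and `(0,0)` lies in the inner limit — and this limit is a monotone set which is not
maximally monotone. -/
theorem graphical_limit_not_maximal
    (T : l2 → l2) (hT : ∀ (x : l2) (n : ℕ), T x n = f (n + 1) ‖x‖)
    (α : ℝ) (hα0 : α ≠ 0) (hα : |α| ≤ 2 / Real.sqrt 17)
    (B : ℕ → l2 → l2)
    (hB : ∀ (m : ℕ) (x : l2), B m x = x + (α * m) • T ((m:ℝ)⁻¹ • x)) :
    (∀ m : ℕ, ((0, 0) : l2 × l2) ∈ {p : l2 × l2 | p.2 = B m p.1}) ∧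
    -- outer limit ⊆ {(0,0)}
    (∀ (mk : ℕ → ℕ), Filter.Tendsto mk Filter.atTop Filter.atTop →
      ∀ pk : ℕ → l2 × l2, (∀ k, pk k ∈ {p : l2 × l2 | p.2 = B (mk k) p.1}) →
      ∀ p : l2 × l2, Filter.Tendsto pk Filter.atTop (nhds p) → p = (0, 0)) ∧
    -- {(0,0)} ⊆ inner limit
    (∃ pk : ℕ → l2 × l2, (∀ m, pk m ∈ {p : l2 × l2 | p.2 = B m p.1}) ∧
      Filter.Tendsto pk Filter.atTop (nhds ((0, 0) : l2 × l2))) ∧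
    IsMonotoneSet ({((0 : l2), (0 : l2))} : Set (l2 × l2)) ∧
    ¬ IsMaxMonotoneSet ({((0 : l2), (0 : l2))} : Set (l2 × l2)) :=
  graphical_limit_not_maximal_general T hT α hα0 B hB
end

section
/- The operator B(x) = x + αT(x) with 0 < |α| ≤ 2/√17 is proto-differentiable at 0 relative to 0 = B(0), and its proto-derivative there is the operator Z with graph {(0,0)}: for τ ↘ 0, the graphs of the difference quotients B_τ(x) := τ^{-1} B(τ x) converge graphically to {(0,0)}. -/
lemma f_zero_of_le {n : ℕ} {t : ℝ} (h : t ≤ (2:ℝ)^(-(n:ℤ)-1)) : f n t = 0 := by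
  simp [f, h]

lemma f_plateau {m : ℕ} {t : ℝ} (h1 : (2:ℝ)^(-(m:ℤ)) < t)
    (h2 : t ≤ (2:ℝ)^(-(m:ℤ)+1)) : f m t = (2:ℝ)^(-(m:ℤ)) := by
  have hlt1 : (2:ℝ)^(-(m:ℤ)-1) < (2:ℝ)^(-(m:ℤ)) := by
    apply zpow_lt_zpow_right₀ one_lt_two; omega
  have hlt2 : (2:ℝ)^(-(m:ℤ)+1) < (2:ℝ)^(-(m:ℤ)+2) := by
    apply zpow_lt_zpow_right₀ one_lt_two; omega
  rw [f, if_neg, if_neg (not_le.2 h1), if_pos h2]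
  rintro (h | h)
  · exact absurd h (not_le.2 (hlt1.trans h1))
  · exact absurd h (not_le.2 (h2.trans_lt hlt2))

lemma exists_bracket {t : ℝ} (h0 : 0 < t) (h1 : t ≤ 1) :
    ∃ m : ℕ, 1 ≤ m ∧ (2:ℝ)^(-(m:ℤ)) < t ∧ t ≤ (2:ℝ)^(-(m:ℤ)+1) := by
  obtain ⟨n, hn1, hn2⟩ := exists_mem_Ioc_zpow h0 (one_lt_two (α := ℝ))
  have hneg : n < 0 := by
    by_contra h
    push_neg at h
    have : (1:ℝ) ≤ (2:ℝ)^n := one_le_zpow₀ one_le_two h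
    linarith
  refine ⟨(-n).toNat, by omega, ?_, ?_⟩
  · have : (-(((-n).toNat:ℤ))) = n := by omega
    rwa [this]
  · have : (-(((-n).toNat:ℤ)) + 1) = n + 1 := by omega
    rwa [this]

lemma norm_T_ge (T : l2 → l2) (hT : ∀ (x : l2) (n : ℕ), T x n = f (n + 1) ‖x‖)
    (z : l2) (hz : ‖z‖ ≤ 1) : ‖z‖ / 2 ≤ ‖T z‖ := by
  rcases eq_or_lt_of_le (norm_nonneg z) with h0 | h0
  · simp [← h0]
  obtain ⟨m, hm1, hb1, hb2⟩ := exists_bracket h0 hz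
  obtain ⟨j, rfl⟩ : ∃ j, m = j + 1 := ⟨m - 1, by omega⟩
  have hcoord : T z j = (2:ℝ)^(-((j+1:ℕ):ℤ)) := by
    rw [hT]; exact f_plateau hb1 hb2
  have hle : ‖T z j‖ ≤ ‖T z‖ := lp.norm_apply_le_norm two_ne_zero (T z) j
  rw [hcoord, Real.norm_eq_abs] at hle
  have hpos : (0:ℝ) < (2:ℝ)^(-((j+1:ℕ):ℤ)) := by positivity
  rw [abs_of_pos hpos] at hle
  have : ‖z‖ / 2 ≤ (2:ℝ)^(-((j+1:ℕ):ℤ)) := by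
    have h2 : (2:ℝ)^(-((j+1:ℕ):ℤ)+1) = 2 * (2:ℝ)^(-((j+1:ℕ):ℤ)) := by
      rw [zpow_add₀ (two_ne_zero), zpow_one]; ring
    rw [h2] at hb2; linarith
  linarith

lemma coord_tendsto {vk : ℕ → l2} {v : l2}
    (h : Filter.Tendsto vk Filter.atTop (nhds v)) (n : ℕ) :
    Filter.Tendsto (fun k => vk k n) Filter.atTop (nhds (v n)) := by
  have h' : Filter.Tendsto (fun k => ‖vk k - v‖) Filter.atTop (nhds 0) :=
    tendsto_iff_norm_sub_tendsto_zero.1 h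
  have hb : ∀ k, ‖vk k n - v n‖ ≤ ‖vk k - v‖ := fun k => by
    simpa [lp.coeFn_sub] using lp.norm_apply_le_norm two_ne_zero (vk k - v) n
  have := squeeze_zero_norm hb h'
  simpa using this.add_const (v n)

/-- `B = Id + α T` is proto-differentiable at `0` relative to `0 = B 0`, with
proto-derivative the operator with graph `{(0,0)}`: the graphs of the difference
quotients `B_τ x = τ⁻¹ B (τ x)` converge graphically (Kuratowski) to `{(0,0)}`
as `τ ↘ 0`. -/
theorem proto_derivative_at_zero
    (T : l2 → l2) (hT : ∀ (x : l2) (n : ℕ), T x n = f (n + 1) ‖x‖)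
    (α : ℝ) (hα0 : α ≠ 0) (hα : |α| ≤ 2 / Real.sqrt 17)
    (B : l2 → l2) (hB : ∀ x : l2, B x = x + α • T x) :
    -- outer limit: any graphical limit point along τₖ ↘ 0 is (0,0)
    (∀ (τk : ℕ → ℝ), (∀ k, 0 < τk k) → Filter.Tendsto τk Filter.atTop (nhds 0) →
      ∀ (xk : ℕ → l2) (x y : l2),
        Filter.Tendsto xk Filter.atTop (nhds x) →
        Filter.Tendsto (fun k => (τk k)⁻¹ • B (τk k • xk k)) Filter.atTop (nhds y) →
        x = 0 ∧ y = 0) ∧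
    -- inner limit: (0,0) belongs to every graph B_τ
    (∀ τ : ℝ, 0 < τ → τ⁻¹ • B (τ • (0 : l2)) = 0) := by
  constructor
  · intro τk hτpos hτ0 xk x y hx hy
    set uk : ℕ → l2 := fun k => (τk k)⁻¹ • T (τk k • xk k) with huk
    have hQ : ∀ k, (τk k)⁻¹ • B (τk k • xk k) = xk k + α • uk k := by
      intro k
      rw [hB, smul_add, smul_smul, inv_mul_cancel₀ (hτpos k).ne', one_smul, huk]
      congr 1
      rw [smul_comm]
    have h1 : Filter.Tendsto (fun k => α • uk k) Filter.atTop (nhds (y - x)) := by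
      have := hy.sub hx
      refine this.congr fun k => ?_
      rw [hQ k, add_sub_cancel_left]
    have h2 : Filter.Tendsto uk Filter.atTop (nhds (α⁻¹ • (y - x))) := by
      have := h1.const_smul α⁻¹
      simpa [smul_smul, inv_mul_cancel₀ hα0] using this
    have hnx : Filter.Tendsto (fun k => ‖xk k‖) Filter.atTop (nhds ‖x‖) := hx.norm
    have ht0 : Filter.Tendsto (fun k => τk k * ‖xk k‖) Filter.atTop (nhds 0) := by
      simpa using hτ0.mul hnx
    have hns : ∀ k, ‖τk k • xk k‖ = τk k * ‖xk k‖ := fun k => by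
      rw [norm_smul, Real.norm_eq_abs, abs_of_pos (hτpos k)]
    have hcoord : ∀ k n, uk k n = (τk k)⁻¹ * f (n+1) (τk k * ‖xk k‖) := by
      intro k n
      rw [huk]
      show ((τk k)⁻¹ • T (τk k • xk k)) n = _
      rw [lp.coeFn_smul, Pi.smul_apply, hT, hns k, smul_eq_mul]
    have hw : α⁻¹ • (y - x) = 0 := by
      apply lp.ext; funext n
      have hev : ∀ᶠ k in Filter.atTop, uk k n = 0 := by
        have hpos : (0:ℝ) < (2:ℝ)^(-((n+1:ℕ):ℤ)-1) := by positivity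
        filter_upwards [ht0.eventually_lt_const hpos] with k hk
        rw [hcoord k n, f_zero_of_le hk.le, mul_zero]
      have hlim := coord_tendsto h2 n
      have h0 : Filter.Tendsto (fun k => uk k n) Filter.atTop (nhds 0) :=
        tendsto_const_nhds.congr' ((hev.mono fun k h => h.symm))
      have := tendsto_nhds_unique hlim h0
      simpa using this
    have hyx : y = x := by
      have : y - x = α • (α⁻¹ • (y - x)) := by
        rw [smul_smul, mul_inv_cancel₀ hα0, one_smul]
      rw [hw, smul_zero] at this
      exact sub_eq_zero.1 this
    have hu0 : Filter.Tendsto (fun k => ‖uk k‖) Filter.atTop (nhds 0) := by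
      have := h2.norm
      rw [hw] at this
      simpa using this
    have hnormge : ∀ᶠ k in Filter.atTop, ‖xk k‖ / 2 ≤ ‖uk k‖ := by
      filter_upwards [ht0.eventually_lt_const one_pos] with k hk
      have hTz := norm_T_ge T hT (τk k • xk k) (by rw [hns k]; exact hk.le)
      rw [hns k] at hTz
      have hnu : ‖uk k‖ = (τk k)⁻¹ * ‖T (τk k • xk k)‖ := by
        rw [huk]
        show ‖(τk k)⁻¹ • T (τk k • xk k)‖ = _
        rw [norm_smul, Real.norm_eq_abs, abs_of_pos (inv_pos.2 (hτpos k))]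
      rw [hnu]
      have hinv : (0:ℝ) < (τk k)⁻¹ := inv_pos.2 (hτpos k)
      calc ‖xk k‖ / 2 = (τk k)⁻¹ * (τk k * ‖xk k‖ / 2) := by
            rw [mul_div_assoc, ← mul_assoc, inv_mul_cancel₀ (hτpos k).ne', one_mul]
        _ ≤ (τk k)⁻¹ * ‖T (τk k • xk k)‖ :=
            mul_le_mul_of_nonneg_left hTz hinv.le
    have hxle : ‖x‖ / 2 ≤ 0 :=
      le_of_tendsto_of_tendsto (hnx.div_const 2) hu0 hnormge
    have hx0 : x = 0 := by
      have : ‖x‖ ≤ 0 := by linarith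
      exact norm_le_zero_iff.1 this
    exact ⟨hx0, by rw [hyx, hx0]⟩
  · intro τ hτ
    have hT0 : T 0 = 0 := by
      apply lp.ext; funext n
      have : (0:ℝ) ≤ (2:ℝ)^(-((n+1:ℕ):ℤ)-1) := by positivity
      have h := f_zero_of_le (n := n+1) (t := ‖(0:l2)‖) (by simpa using this)
      rw [hT, h]
      simp
    rw [smul_zero, hB, hT0, smul_zero, add_zero, smul_zero]
end
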